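/- arXiv:2007.01412 — 9 statements merged into one kernel-verified Lean document; each statement's English description precedes it below -/
import Mathlib

section
/- Let a > 0 be a real number and let k be an integer with k ≥ a + 1 and k·a ≥ a + 1. Then min over integers i with 1 ≤ i ≤ k − 1 of max(π²·i², π²·(k−i)²/a²) equals min( π²·⌈a·k/(a+1)⌉²/a² , π²·⌈k/(a+1)⌉² ), where ⌈x⌉ denotes the ceiling of the real number x. -/
open Real

/-- Equation (6.10): closed form of the minimal Neumann partition energy of two
disjoint intervals of lengths `1` and `a`. -/
theorem stmt1 (a : ℝ) (ha : 0 < a) (k : ℤ)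
    (hk1 : a + 1 ≤ (k : ℝ)) (hk2 : a + 1 ≤ (k : ℝ) * a) :
    sInf ((fun i : ℤ =>
        max (π ^ 2 * (i : ℝ) ^ 2) (π ^ 2 * ((k : ℝ) - (i : ℝ)) ^ 2 / a ^ 2)) ''
        {i : ℤ | 1 ≤ i ∧ i ≤ k - 1})
      = min (π ^ 2 * ((⌈a * (k : ℝ) / (a + 1)⌉ : ℝ)) ^ 2 / a ^ 2)
          (π ^ 2 * ((⌈(k : ℝ) / (a + 1)⌉ : ℝ)) ^ 2) := by
  have ha1 : (0:ℝ) < a + 1 := by linarith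
  set c : ℝ := (k:ℝ) / (a+1) with hc
  set p : ℤ := ⌊c⌋ with hp
  set q : ℤ := ⌈c⌉ with hq
  have hpc : (p:ℝ) ≤ c := Int.floor_le c
  have hqc : c ≤ (q:ℝ) := Int.le_ceil c
  have hc1 : 1 ≤ c := (le_div_iff₀ ha1).2 (by linarith)
  have hck : c ≤ (k:ℝ) - 1 := by
    rw [hc, div_le_iff₀ ha1]; nlinarith
  have hp1 : 1 ≤ p := by
    rw [hp]; exact Int.le_floor.2 (by exact_mod_cast hc1)
  have hqk : q ≤ k - 1 := by
    rw [hq]; exact Int.ceil_le.2 (by push_cast; linarith)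
  have hpq : p ≤ q := Int.floor_le_ceil c
  have hcl : (⌈a * (k:ℝ) / (a+1)⌉ : ℤ) = k - p := by
    have h : a * (k:ℝ) / (a+1) = -c + (k:ℝ) := by
      rw [hc]; field_simp; ring
    rw [h, Int.ceil_add_intCast, Int.ceil_neg, ← hp]; ring
  have hpi : p * (a+1) ≤ (k:ℝ) := (le_div_iff₀ ha1).1 hpc
  have hqi : (k:ℝ) ≤ q * (a+1) := (div_le_iff₀ ha1).1 hqc
  have hpR : (1:ℝ) ≤ (p:ℝ) := by exact_mod_cast hp1
  have hqR : (q:ℝ) ≤ (k:ℝ) - 1 := by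
    have : ((q:ℤ):ℝ) ≤ ((k-1:ℤ):ℝ) := by exact_mod_cast hqk
    push_cast at this; linarith
  have ha2 : (0:ℝ) < a ^ 2 := by positivity
  -- value at p : max equals right branch
  have hfp : max (π ^ 2 * (p : ℝ) ^ 2) (π ^ 2 * ((k : ℝ) - (p : ℝ)) ^ 2 / a ^ 2)
      = π ^ 2 * ((k : ℝ) - (p : ℝ)) ^ 2 / a ^ 2 := by
    apply max_eq_right
    rw [le_div_iff₀ ha2]
    have h1 : a * (p:ℝ) ≤ (k:ℝ) - p := by nlinarith
    have h2 : (0:ℝ) ≤ a * p := by positivity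
    have h3 : (a * (p:ℝ))^2 ≤ ((k:ℝ) - p)^2 := by nlinarith
    calc π ^ 2 * (p:ℝ) ^ 2 * a ^ 2 = π ^ 2 * (a * (p:ℝ)) ^ 2 := by ring
      _ ≤ π ^ 2 * ((k:ℝ) - p) ^ 2 := by gcongr <;> nlinarith
  -- value at q : max equals left branch
  have hfq : max (π ^ 2 * (q : ℝ) ^ 2) (π ^ 2 * ((k : ℝ) - (q : ℝ)) ^ 2 / a ^ 2)
      = π ^ 2 * (q : ℝ) ^ 2 := by
    apply max_eq_left
    rw [div_le_iff₀ ha2]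
    have hq0 : (1:ℝ) ≤ (q:ℝ) := le_trans hpR (by exact_mod_cast hpq)
    have h1 : (k:ℝ) - q ≤ a * q := by nlinarith
    have h2 : (0:ℝ) ≤ (k:ℝ) - q := by linarith
    have h3 : ((k:ℝ) - q)^2 ≤ (a * (q:ℝ))^2 := by nlinarith
    calc π ^ 2 * ((k:ℝ) - q) ^ 2 ≤ π ^ 2 * (a * (q:ℝ)) ^ 2 := by gcongr <;> nlinarith
      _ = π ^ 2 * (q:ℝ) ^ 2 * a ^ 2 := by ring
  have hbdd : BddBelow ((fun i : ℤ =>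
        max (π ^ 2 * (i : ℝ) ^ 2) (π ^ 2 * ((k : ℝ) - (i : ℝ)) ^ 2 / a ^ 2)) ''
        {i : ℤ | 1 ≤ i ∧ i ≤ k - 1}) := by
    refine ⟨0, ?_⟩
    rintro x ⟨i, -, rfl⟩
    exact le_trans (by positivity) (le_max_left _ _)
  have hmem_p : π ^ 2 * ((k : ℝ) - (p : ℝ)) ^ 2 / a ^ 2 ∈ ((fun i : ℤ =>
        max (π ^ 2 * (i : ℝ) ^ 2) (π ^ 2 * ((k : ℝ) - (i : ℝ)) ^ 2 / a ^ 2)) ''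
        {i : ℤ | 1 ≤ i ∧ i ≤ k - 1}) := ⟨p, ⟨hp1, le_trans hpq hqk⟩, hfp⟩
  have hmem_q : π ^ 2 * (q : ℝ) ^ 2 ∈ ((fun i : ℤ =>
        max (π ^ 2 * (i : ℝ) ^ 2) (π ^ 2 * ((k : ℝ) - (i : ℝ)) ^ 2 / a ^ 2)) ''
        {i : ℤ | 1 ≤ i ∧ i ≤ k - 1}) := ⟨q, ⟨le_trans hp1 hpq, hqk⟩, hfq⟩
  have hRHS : min (π ^ 2 * ((⌈a * (k : ℝ) / (a + 1)⌉ : ℝ)) ^ 2 / a ^ 2)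
          (π ^ 2 * ((⌈(k : ℝ) / (a + 1)⌉ : ℝ)) ^ 2)
      = min (π ^ 2 * ((k : ℝ) - (p : ℝ)) ^ 2 / a ^ 2) (π ^ 2 * (q : ℝ) ^ 2) := by
    rw [hcl, ← hc, ← hq]; push_cast; ring_nf
  rw [hRHS]
  apply le_antisymm
  · rcases le_total (π ^ 2 * ((k : ℝ) - (p : ℝ)) ^ 2 / a ^ 2) (π ^ 2 * (q : ℝ) ^ 2) with h | h
    · rw [min_eq_left h]; exact csInf_le hbdd hmem_p
    · rw [min_eq_right h]; exact csInf_le hbdd hmem_q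
  · apply le_csInf ⟨_, hmem_q⟩
    rintro x ⟨i, ⟨hi1, hi2⟩, rfl⟩
    rcases le_total (i:ℝ) c with h | h
    · -- i ≤ p
      have hip : i ≤ p := Int.le_floor.2 h
      have hipR : (i:ℝ) ≤ (p:ℝ) := by exact_mod_cast hip
      refine le_trans (min_le_left _ _) (le_trans ?_ (le_max_right _ _))
      have hkp : (0:ℝ) ≤ (k:ℝ) - p := by linarith
      gcongr
      all_goals linarith
    · -- q ≤ i
      have hqiZ : q ≤ i := Int.ceil_le.2 h
      have hqiR : (q:ℝ) ≤ (i:ℝ) := by exact_mod_cast hqiZ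
      refine le_trans (min_le_right _ _) (le_trans ?_ (le_max_left _ _))
      have h0q : (0:ℝ) ≤ (q:ℝ) := by
        have := le_trans hpR (show (p:ℝ) ≤ q by exact_mod_cast hpq); linarith
      gcongr
end

section
/- Let a > 0 be an irrational real number, and for an integer k ≥ 2 set N_a(k) := min( π²·⌈a·k/(a+1)⌉²/a² , π²·⌈k/(a+1)⌉² ) and c_a(k) := (N_a(k) − π²·k²/(a+1)²)/k. Let x ∈ [0,1] and let (k_n) be a strictly increasing sequence of integers ≥ 2 such that fract(k_n/(a+1)) → x, where fract(y) := y − ⌊y⌋. Then c_a(k_n) → min( 2π²·(1−x)/(a+1) , 2π²·x/(a·(a+1)) ) as n → ∞. -/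
/-!
For irrational `a` and `k > 0`, with `f = fract (k / (a + 1))`, neither `k / (a + 1)` nor
`a * k / (a + 1) = k - k / (a + 1)` is an integer, and their ceilings are `k / (a + 1) + (1 - f)`
and `a * k / (a + 1) + f`. Expanding the squares, `c_a(k)` is the minimum of
`2π²(1 - f)/(a + 1) + π²(1 - f)²/k` and `2π²f/(a(a + 1)) + π²f²/(a²k)`, whose `1/k` terms vanish
as `k → ∞` while `f → x`.
-/

open Real Filter

theorem StrictMono.tendsto_atTop_of_int {u : ℕ → ℤ} (hu : StrictMono u) :
    Tendsto u atTop atTop := by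
  have hle : ∀ n : ℕ, u 0 + n ≤ u n := fun n => by
    induction n with
    | zero => simp
    | succ m ih =>
      have := hu (lt_add_one m)
      push_cast
      omega
  exact tendsto_atTop_mono hle (tendsto_atTop_add_const_left _ _ tendsto_natCast_atTop_atTop)

theorem Int.cast_ceil_intCast_sub (n : ℤ) (t : ℝ) :
    (⌈(n : ℝ) - t⌉ : ℝ) = n - t + Int.fract t := by
  rw [sub_eq_add_neg, Int.ceil_intCast_add, Int.ceil_neg, ← Int.self_sub_floor]
  push_cast
  ring

theorem Irrational.fract_intCast_div_ne_zero {a : ℝ} (ha : Irrational a) {k : ℤ} (hk : k ≠ 0) :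
    Int.fract ((k : ℝ) / (a + 1)) ≠ 0 := by
  rw [Int.fract_ne_zero_iff]
  rintro ⟨m, hm⟩
  exact ((ha.add_intCast 1).intCast_div hk).ne_int m (by simpa using hm.symm)

theorem sq_add_sub_sq_div (p c s k e : ℝ) (hc : c ≠ 0) (hs : s ≠ 0) (hk : k ≠ 0) :
    (p * (c * k / s + e) ^ 2 / c ^ 2 - p * k ^ 2 / s ^ 2) / k
      = 2 * p * e / (c * s) + p * e ^ 2 / (c ^ 2 * k) := by
  field_simp
  ring

theorem deviation_eq_min {a : ℝ} (ha : Irrational a) {k : ℤ} (hk : 0 < k) :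
    (min (π ^ 2 * ((⌈a * (k : ℝ) / (a + 1)⌉ : ℝ)) ^ 2 / a ^ 2)
        (π ^ 2 * ((⌈(k : ℝ) / (a + 1)⌉ : ℝ)) ^ 2) - π ^ 2 * (k : ℝ) ^ 2 / (a + 1) ^ 2) / k
      = min
          (2 * π ^ 2 * Int.fract ((k : ℝ) / (a + 1)) / (a * (a + 1))
            + π ^ 2 * Int.fract ((k : ℝ) / (a + 1)) ^ 2 / (a ^ 2 * k))
          (2 * π ^ 2 * (1 - Int.fract ((k : ℝ) / (a + 1))) / (a + 1)
            + π ^ 2 * (1 - Int.fract ((k : ℝ) / (a + 1))) ^ 2 / k) := by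
  have ha1 : a + 1 ≠ 0 := by simpa using (ha.add_intCast 1).ne_zero
  have hk0 : (0 : ℝ) < k := by exact_mod_cast hk
  have hsplit : a * (k : ℝ) / (a + 1) = k - k / (a + 1) := by field_simp; ring
  have hceil : (⌈(k : ℝ) / (a + 1)⌉ : ℝ)
      = 1 * k / (a + 1) + (1 - Int.fract ((k : ℝ) / (a + 1))) := by
    rw [Int.ceil_eq_add_one_sub_fract (ha.fract_intCast_div_ne_zero hk.ne')]
    ring
  rw [hceil, hsplit, Int.cast_ceil_intCast_sub, ← hsplit, ← min_sub_sub_right,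
    ← min_div_div_right hk0.le]
  congr 1
  · exact sq_add_sub_sq_div _ _ _ _ _ ha.ne_zero ha1 hk0.ne'
  · simpa using sq_add_sub_sq_div (π ^ 2) 1 (a + 1) k _ one_ne_zero ha1 hk0.ne'

theorem tendsto_two_mul_add_sq_div {ι : Type*} {l : Filter ι} {f k : ι → ℝ} {x : ℝ}
    (hf : Tendsto f l (nhds x)) (hk : Tendsto k l atTop) (p c s : ℝ) :
    Tendsto (fun i => 2 * p * f i / (c * s) + p * f i ^ 2 / (c ^ 2 * k i)) l
      (nhds (2 * p * x / (c * s))) := by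
  have hrem : Tendsto (fun i => p * f i ^ 2 / (c ^ 2 * k i)) l (nhds 0) := by
    simpa [div_eq_mul_inv, mul_inv, mul_assoc] using
      ((hf.pow 2).const_mul p).mul ((hk.inv_tendsto_atTop).mul_const (c ^ 2)⁻¹)
  simpa using ((hf.const_mul (2 * p)).div_const (c * s)).add hrem

theorem stmt4_general (a : ℝ) (hirr : Irrational a)
    (N c : ℤ → ℝ)
    (hN : ∀ k : ℤ, N k = min (π ^ 2 * ((⌈a * (k : ℝ) / (a + 1)⌉ : ℝ)) ^ 2 / a ^ 2)
        (π ^ 2 * ((⌈(k : ℝ) / (a + 1)⌉ : ℝ)) ^ 2))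
    (hc : ∀ k : ℤ, c k = (N k - π ^ 2 * (k : ℝ) ^ 2 / (a + 1) ^ 2) / (k : ℝ))
    (x : ℝ)
    (ks : ℕ → ℤ) (hmono : StrictMono ks)
    (hfr : Tendsto (fun n : ℕ => Int.fract ((ks n : ℝ) / (a + 1))) atTop (nhds x)) :
    Tendsto (fun n : ℕ => c (ks n)) atTop
      (nhds (min (2 * π ^ 2 * (1 - x) / (a + 1)) (2 * π ^ 2 * x / (a * (a + 1))))) := by
  have hk : Tendsto (fun n => (ks n : ℝ)) atTop atTop :=
    tendsto_intCast_atTop_iff.2 hmono.tendsto_atTop_of_int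
  have hlim := (tendsto_two_mul_add_sq_div hfr hk (π ^ 2) a (a + 1)).min
    (tendsto_two_mul_add_sq_div ((tendsto_const_nhds (x := 1)).sub hfr) hk (π ^ 2) 1 (a + 1))
  simp only [one_mul, one_pow] at hlim
  rw [min_comm] at hlim
  refine hlim.congr' ?_
  filter_upwards [hk.eventually_gt_atTop 0] with n hn
  rw [hc, hN, deviation_eq_min hirr (by exact_mod_cast hn)]

/-- Key convergence step in Theorem 6.6: along any subsequence `k_n` with
`fract(k_n/(a+1)) → x`, the normalised deviation `c_a(k_n)` converges to
`min(2π²(1−x)/(a+1), 2π²x/(a(a+1)))`. -/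
theorem stmt4 (a : ℝ) (ha : 0 < a) (hirr : Irrational a)
    (N c : ℤ → ℝ)
    (hN : ∀ k : ℤ, N k = min (π ^ 2 * ((⌈a * (k : ℝ) / (a + 1)⌉ : ℝ)) ^ 2 / a ^ 2)
        (π ^ 2 * ((⌈(k : ℝ) / (a + 1)⌉ : ℝ)) ^ 2))
    (hc : ∀ k : ℤ, c k = (N k - π ^ 2 * (k : ℝ) ^ 2 / (a + 1) ^ 2) / (k : ℝ))
    (x : ℝ) (hx : x ∈ Set.Icc (0 : ℝ) 1)
    (ks : ℕ → ℤ) (hmono : StrictMono ks) (hks : ∀ n, 2 ≤ ks n)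
    (hfr : Tendsto (fun n : ℕ => Int.fract ((ks n : ℝ) / (a + 1))) atTop (nhds x)) :
    Tendsto (fun n : ℕ => c (ks n)) atTop
      (nhds (min (2 * π ^ 2 * (1 - x) / (a + 1)) (2 * π ^ 2 * x / (a * (a + 1))))) :=
  stmt4_general a hirr N c hN hc x ks hmono hfr
end

section
/- Let a > 0 be an irrational real number, and for an integer k ≥ 2 set N_a(k) := min( π²·⌈a·k/(a+1)⌉²/a² , π²·⌈k/(a+1)⌉² ) and c_a(k) := (N_a(k) − π²·k²/(a+1)²)/k. Then the set of cluster points of the sequence (c_a(k))_{k≥2} (i.e. the set of real numbers x such that some subsequence of (c_a(k)) converges to x) is exactly the closed interval [0, 2π²/(a+1)²]. -/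
/-!
Put `α = a / (a + 1)` and `s_k = {k α}`. Since `k / (a + 1) = k - k α`, both ceilings are
explicit in `s_k`: `⌈a k / (a + 1)⌉ = a k / (a + 1) + 1 - s_k` (as `s_k ≠ 0`, `α` being
irrational) and `⌈k / (a + 1)⌉ = k / (a + 1) + s_k`. Hence
`N_a(k) = π² (k / (a + 1) + g(s_k))²` with `g(s) = min ((1 - s) / a, s)`, and
`c_a(k) = 2π² g(s_k) / (a + 1) + O(1 / k)`.
As `g(0) = g(1) = 0`, `g` is a continuous function on the circle `ℝ / ℤ`, and every point of the
circle is a cluster point of the irrational rotation `k α`, `k ∈ ℕ`. So the cluster points of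
`c_a` are exactly the values of `2π² g / (a + 1)`, which fill `[0, 2π² / (a + 1)²]`.
-/

open Real Filter Topology Set

section ClusterPoints

variable {ι X : Type*} [TopologicalSpace X] {l : Filter ι}

theorem MapClusterPt.add_of_tendsto [Add X] [ContinuousAdd X] {x y : X} {u v : ι → X}
    (hu : MapClusterPt x l u) (hv : Tendsto v l (𝓝 y)) : MapClusterPt (x + y) l (u + v) := by
  have hpair : MapClusterPt (x, y) l fun i => (u i, v i) := by
    refine mapClusterPt_iff_frequently.2 fun s hs => ?_
    obtain ⟨U, hU, V, hV, hUV⟩ := mem_nhds_prod_iff.1 hs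
    exact ((mapClusterPt_iff_frequently.1 hu U hU).and_eventually (hv hV)).mono
      fun i hi => hUV (mk_mem_prod hi.1 hi.2)
  exact hpair.continuousAt_comp continuous_add.continuousAt

theorem mapClusterPt_add_iff_of_tendsto_zero [AddGroup X] [IsTopologicalAddGroup X] {x : X}
    {u v : ι → X} (hv : Tendsto v l (𝓝 0)) :
    MapClusterPt x l (u + v) ↔ MapClusterPt x l u := by
  refine ⟨fun h => ?_, fun h => by simpa using h.add_of_tendsto hv⟩
  have hnegv : Tendsto (-v) l (𝓝 0) := by
    rw [← neg_zero]
    exact hv.neg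
  simpa using h.add_of_tendsto hnegv

theorem setOf_mapClusterPt_comp_eq_range [CompactSpace X] {Y : Type*} [TopologicalSpace Y]
    [T2Space Y] {u : ι → X} (hu : ∀ x, MapClusterPt x l u) {f : X → Y} (hf : Continuous f) :
    {y | MapClusterPt y l (f ∘ u)} = range f := by
  ext y
  refine ⟨fun hy => ?_, ?_⟩
  · exact (isCompact_range hf).isClosed.mem_of_mapClusterPt hy
      (Eventually.of_forall fun i => mem_range_self (u i))
  · rintro ⟨x, rfl⟩
    exact (hu x).continuousAt_comp hf.continuousAt

end ClusterPoints

namespace Irrational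

theorem fract_ne_zero {x : ℝ} (hx : Irrational x) : Int.fract x ≠ 0 :=
  Int.fract_ne_zero_iff.2 fun ⟨m, hm⟩ => hx.ne_int m hm.symm

theorem div_add_one {a : ℝ} (ha : Irrational a) : Irrational (a / (a + 1)) := by
  have hne : a + 1 ≠ 0 := fun h => ha.ne_int (-1) (by push_cast; linarith)
  convert (ha.add_natCast 1).inv.intCast_sub 1 using 1
  push_cast
  field_simp
  ring

theorem mapClusterPt_nsmul_coe {α : ℝ} (hα : Irrational α) (z : AddCircle (1 : ℝ)) :
    MapClusterPt z atTop fun k : ℕ => k • (α : AddCircle (1 : ℝ)) := by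
  have hdense : DenseRange fun m : ℤ => m • (α : AddCircle (1 : ℝ)) :=
    AddCircle.denseRange_zsmul_coe_iff.2 (by rwa [div_one])
  exact ((mapClusterPt_atTop_nsmul_tfae z _).out 0 3).2 (hdense.closure_range ▸ mem_univ z)

end Irrational

namespace AddCircle

theorem liftIco_one_zero_coe {B : Type*} (f : ℝ → B) (t : ℝ) :
    liftIco 1 0 f (t : AddCircle (1 : ℝ)) = f (Int.fract t) := by
  rw [← coe_fract, liftIco_zero_coe_apply ⟨Int.fract_nonneg t, Int.fract_lt_one t⟩]

theorem range_liftIco_one_zero {B : Type*} (f : ℝ → B) :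
    range (liftIco 1 0 f) = f '' Ico 0 1 := by
  ext y
  constructor
  · rintro ⟨z, rfl⟩
    obtain ⟨t, rfl⟩ := QuotientAddGroup.mk_surjective z
    exact ⟨Int.fract t, ⟨Int.fract_nonneg t, Int.fract_lt_one t⟩,
      (liftIco_one_zero_coe f t).symm⟩
  · rintro ⟨t, ht, rfl⟩
    exact ⟨t, liftIco_zero_coe_apply ht⟩

end AddCircle

theorem min_sq_of_nonneg {R : Type*} [Semiring R] [LinearOrder R] [IsOrderedRing R] {p q : R}
    (hp : 0 ≤ p) (hq : 0 ≤ q) : min (p ^ 2) (q ^ 2) = min p q ^ 2 := by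
  rcases le_total p q with h | h
  · rw [min_eq_left h, min_eq_left (pow_le_pow_left₀ hp h 2)]
  · rw [min_eq_right h, min_eq_right (pow_le_pow_left₀ hq h 2)]

/-- With `s = {k a / (a + 1)}`, the two candidate lengths `⌈a k / (a + 1)⌉ / a` and
`⌈k / (a + 1)⌉` exceed `k / (a + 1)` by `(1 - s) / a` and by `s`; `ceilExcess a s` is the
smaller excess. -/
noncomputable def ceilExcess (a s : ℝ) : ℝ := min ((1 - s) / a) s

section ceilExcess

variable {a : ℝ}

theorem continuous_ceilExcess (a : ℝ) : Continuous (ceilExcess a) := by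
  unfold ceilExcess
  fun_prop

theorem ceilExcess_zero (ha : 0 ≤ a) : ceilExcess a 0 = 0 :=
  min_eq_right (by positivity)

theorem ceilExcess_one (a : ℝ) : ceilExcess a 1 = 0 := by
  simp [ceilExcess]

theorem ceilExcess_nonneg (ha : 0 ≤ a) {s : ℝ} (hs0 : 0 ≤ s) (hs1 : s ≤ 1) :
    0 ≤ ceilExcess a s :=
  le_min (div_nonneg (by linarith) ha) hs0

theorem ceilExcess_le (ha : 0 < a) (s : ℝ) : ceilExcess a s ≤ (a + 1)⁻¹ := by
  rcases le_or_gt s (a + 1)⁻¹ with h | h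
  · exact (min_le_right _ _).trans h
  · refine (min_le_left _ _).trans ?_
    rw [div_le_iff₀ ha]
    rw [inv_lt_iff_one_lt_mul₀ (by positivity)] at h
    field_simp
    nlinarith

theorem ceilExcess_of_le (ha : 0 < a) {s : ℝ} (hs : s ≤ (a + 1)⁻¹) : ceilExcess a s = s := by
  refine min_eq_right ?_
  have h : s * (a + 1) ≤ 1 := by rwa [← le_div_iff₀ (by linarith), one_div]
  rw [le_div_iff₀ ha]
  linarith

theorem image_ceilExcess_Ico (ha : 0 < a) : ceilExcess a '' Ico 0 1 = Icc 0 (a + 1)⁻¹ := by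
  ext y
  constructor
  · rintro ⟨s, ⟨hs0, hs1⟩, rfl⟩
    exact ⟨ceilExcess_nonneg ha.le hs0 hs1.le, ceilExcess_le ha s⟩
  · rintro ⟨hy0, hy1⟩
    have hy1' : y < 1 := hy1.trans_lt (inv_lt_one_of_one_lt₀ (by linarith))
    exact ⟨y, ⟨hy0, hy1'⟩, ceilExcess_of_le ha hy1⟩

theorem range_liftIco_const_mul_ceilExcess (ha : 0 < a) {C : ℝ} (hC : 0 ≤ C) :
    range (AddCircle.liftIco 1 0 fun s => C * ceilExcess a s) = Icc 0 (C / (a + 1)) := by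
  rw [AddCircle.range_liftIco_one_zero, ← image_image (g := (C * ·)), image_ceilExcess_Ico ha,
    image_mul_left_Icc hC (by positivity), mul_zero, div_eq_mul_inv]

theorem tendsto_sq_ceilExcess_fract_div (ha : 0 < a) (α : ℝ) :
    Tendsto (fun k : ℕ => ceilExcess a (Int.fract (k * α)) ^ 2 / k) atTop (𝓝 0) := by
  refine squeeze_zero (fun k => by positivity) (fun k => ?_)
    (tendsto_const_div_atTop_nhds_zero_nat ((a + 1)⁻¹ ^ 2))
  have hg0 := ceilExcess_nonneg ha.le (Int.fract_nonneg (k * α)) (Int.fract_lt_one _).le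
  have hg1 := ceilExcess_le ha (Int.fract (k * α))
  gcongr

theorem min_sq_ceil_eq_sq_add_ceilExcess (ha : 0 < a) (k : ℕ)
    (hs : Int.fract (k * (a / (a + 1))) ≠ 0) :
    min ((⌈a * k / (a + 1)⌉ : ℝ) ^ 2 / a ^ 2) ((⌈(k : ℝ) / (a + 1)⌉ : ℝ) ^ 2)
      = ((k : ℝ) / (a + 1) + ceilExcess a (Int.fract (k * (a / (a + 1))))) ^ 2 := by
  set s := Int.fract (k * (a / (a + 1))) with hs_def
  have hceil_x : (⌈a * k / (a + 1)⌉ : ℝ) / a = k / (a + 1) + (1 - s) / a := by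
    have h : (⌈k * (a / (a + 1))⌉ : ℝ) = k * (a / (a + 1)) + (1 - s) := by
      linarith [Int.ceil_sub_self_eq hs]
    rw [show a * k / (a + 1) = (k : ℝ) * (a / (a + 1)) by ring, h]
    field_simp
  have hceil_y : (⌈(k : ℝ) / (a + 1)⌉ : ℝ) = k / (a + 1) + s := by
    have h : (k : ℝ) / (a + 1) = ((k : ℤ) : ℝ) + -(k * (a / (a + 1))) := by
      push_cast
      field_simp
      ring
    rw [h, Int.ceil_intCast_add, Int.ceil_neg, hs_def, ← Int.self_sub_floor]
    push_cast
    ring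
  have hs1 : s ≤ 1 := (Int.fract_lt_one _).le
  rw [← div_pow, hceil_x, hceil_y, ceilExcess, ← min_add_add_left]
  exact min_sq_of_nonneg (add_nonneg (by positivity) (div_nonneg (by linarith) ha.le))
    (add_nonneg (by positivity) (Int.fract_nonneg _))

theorem weyl_deviation_eq (ha : 0 < a) (k : ℕ) (hs : Int.fract (k * (a / (a + 1))) ≠ 0) :
    (min (π ^ 2 * (⌈a * k / (a + 1)⌉ : ℝ) ^ 2 / a ^ 2) (π ^ 2 * (⌈(k : ℝ) / (a + 1)⌉ : ℝ) ^ 2)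
        - π ^ 2 * (k : ℝ) ^ 2 / (a + 1) ^ 2) / k
      = 2 * π ^ 2 / (a + 1) * ceilExcess a (Int.fract (k * (a / (a + 1))))
        + π ^ 2 * (ceilExcess a (Int.fract (k * (a / (a + 1)))) ^ 2 / k) := by
  have hk : (k : ℝ) ≠ 0 := by
    rintro hk
    simp [hk] at hs
  rw [mul_div_assoc, ← mul_min_of_nonneg _ _ (sq_nonneg π),
    min_sq_ceil_eq_sq_add_ceilExcess ha k hs]
  field_simp
  ring

end ceilExcess

/-- Irrational case of Theorem 6.6: the cluster points of `(c_a(k))_{k≥2}` form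
exactly the interval `[0, 2π²/(a+1)²]`. -/
theorem stmt5 (a : ℝ) (ha : 0 < a) (hirr : Irrational a)
    (N c : ℤ → ℝ)
    (hN : ∀ k : ℤ, N k = min (π ^ 2 * ((⌈a * (k : ℝ) / (a + 1)⌉ : ℝ)) ^ 2 / a ^ 2)
        (π ^ 2 * ((⌈(k : ℝ) / (a + 1)⌉ : ℝ)) ^ 2))
    (hc : ∀ k : ℤ, c k = (N k - π ^ 2 * (k : ℝ) ^ 2 / (a + 1) ^ 2) / (k : ℝ)) :
    {x : ℝ | MapClusterPt x atTop (fun n : ℕ => c ((n : ℤ) + 2))}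
      = Set.Icc 0 (2 * π ^ 2 / (a + 1) ^ 2) := by
  have hα : Irrational (a / (a + 1)) := hirr.div_add_one
  let orbit : ℕ → AddCircle (1 : ℝ) := fun k => k • ((a / (a + 1) : ℝ) : AddCircle (1 : ℝ))
  let Φ : AddCircle (1 : ℝ) → ℝ :=
    AddCircle.liftIco 1 0 fun s => 2 * π ^ 2 / (a + 1) * ceilExcess a s
  let r : ℕ → ℝ := fun k => π ^ 2 * (ceilExcess a (Int.fract (k * (a / (a + 1)))) ^ 2 / k)
  have hΦ : Continuous Φ :=
    AddCircle.liftIco_zero_continuous (by simp [ceilExcess_zero ha.le, ceilExcess_one])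
      (continuous_const.mul (continuous_ceilExcess a)).continuousOn
  have hc_eq : (fun k : ℕ => c k) =ᶠ[atTop] Φ ∘ orbit + r := by
    filter_upwards [eventually_gt_atTop 0] with k hk
    simp only [Pi.add_apply, Function.comp_apply, orbit, ← AddCircle.coe_nsmul, nsmul_eq_mul,
      AddCircle.liftIco_one_zero_coe, hc, hN, Int.cast_natCast, Φ, r]
    exact weyl_deviation_eq ha k (hα.natCast_mul hk.ne').fract_ne_zero
  have hr : Tendsto r atTop (𝓝 0) := by
    simpa using (tendsto_sq_ceilExcess_fract_div ha (a / (a + 1))).const_mul (π ^ 2)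
  have hshift : (fun n : ℕ => c ((n : ℤ) + 2)) = (fun k : ℕ => c k) ∘ (· + 2) := by
    ext n
    simp
  calc {x | MapClusterPt x atTop fun n : ℕ => c ((n : ℤ) + 2)}
      = {x | MapClusterPt x atTop fun k : ℕ => c k} := by
        simp only [hshift, mapClusterPt_comp, map_add_atTop_eq_nat]
    _ = {x | MapClusterPt x atTop (Φ ∘ orbit)} := by
        ext x
        exact hc_eq.mapClusterPt_iff.trans (mapClusterPt_add_iff_of_tendsto_zero hr)
    _ = range Φ := setOf_mapClusterPt_comp_eq_range hα.mapClusterPt_nsmul_coe hΦ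
    _ = Icc 0 (2 * π ^ 2 / (a + 1) ^ 2) := by
        rw [range_liftIco_const_mul_ceilExcess ha (by positivity), div_div, ← sq]
end

section
/- Let a > 0 be a rational real number, and for an integer k ≥ 2 set N_a(k) := min( π²·⌈a·k/(a+1)⌉²/a² , π²·⌈k/(a+1)⌉² ) and c_a(k) := (N_a(k) − π²·k²/(a+1)²)/k. Then the set of cluster points of the sequence (c_a(k))_{k≥2} is finite. -/
open Real Filter Topology Set

/-! With `t = k / (a + 1)`, the minimum defining `N_a(k)` equals `π² (t + g)²`, where `g ∈ [0, 1)`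
is the gap from `t` up to the nearest point of `a⁻¹ℤ ∪ ℤ`; hence `c_a(k) = 2π² g / (a + 1) + O(1/k)`.
For `a = p / d`, shifting `k` by `p + d` shifts `t` by `d` and `a t` by `p`, so `g` is periodic
in `k`. The cluster points of `c_a` are then among the finitely many values of the periodic
main term. -/

theorem Function.Periodic.finite_range_nat {α : Type*} {f : ℕ → α} {m : ℕ}
    (hf : Function.Periodic f m) (hm : 0 < m) : (range f).Finite :=
  ((finite_Iio m).image f).subset <| by
    rintro _ ⟨n, rfl⟩
    exact ⟨n % m, Nat.mod_lt n hm, hf.map_mod_nat n⟩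

theorem MapClusterPt.of_tendsto_dist {ι X : Type*} [PseudoMetricSpace X] {l : Filter ι}
    {u v : ι → X} {x : X} (hu : MapClusterPt x l u)
    (huv : Tendsto (fun i => dist (u i) (v i)) l (𝓝 0)) : MapClusterPt x l v := by
  refine Metric.nhds_basis_ball.mapClusterPt_iff_frequently.2 fun ε hε => ?_
  have hclose := huv.eventually (gt_mem_nhds (half_pos hε))
  refine ((Metric.nhds_basis_ball.mapClusterPt_iff_frequently.1 hu) _ (half_pos hε)).mp
    (hclose.mono fun i hi hui => ?_)
  rw [Metric.mem_ball] at hui ⊢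
  linarith [dist_triangle_left (v i) x (u i)]

theorem finite_setOf_mapClusterPt_of_tendsto_dist {ι X : Type*} [MetricSpace X]
    {l : Filter ι} {u v : ι → X} (hv : (range v).Finite)
    (huv : Tendsto (fun i => dist (u i) (v i)) l (𝓝 0)) :
    {x | MapClusterPt x l u}.Finite :=
  hv.subset fun _ hx =>
    hv.isClosed.mem_of_mapClusterPt (hx.of_tendsto_dist huv) (Eventually.of_forall mem_range_self)

theorem min_sq_of_nonneg_s6 {x y : ℝ} (hx : 0 ≤ x) (hy : 0 ≤ y) :
    min (x ^ 2) (y ^ 2) = min x y ^ 2 := by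
  rcases le_total x y with h | h
  · rw [min_eq_left h, min_eq_left (pow_le_pow_left₀ hx h 2)]
  · rw [min_eq_right h, min_eq_right (pow_le_pow_left₀ hy h 2)]

/-- The distance from `t` up to the nearest point of `a⁻¹ℤ ∪ ℤ` at or above it. -/
noncomputable def ceilGap (a t : ℝ) : ℝ := min (⌈a * t⌉ / a) ⌈t⌉ - t

section ceilGap

variable {a t : ℝ}

theorem ceilGap_nonneg (ha : 0 < a) : 0 ≤ ceilGap a t := by
  have h₁ : t ≤ ⌈a * t⌉ / a := by rw [le_div_iff₀' ha]; exact Int.le_ceil _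
  have h₂ : t ≤ ⌈t⌉ := Int.le_ceil t
  unfold ceilGap
  linarith [le_min h₁ h₂]

theorem ceilGap_lt_one : ceilGap a t < 1 := by
  unfold ceilGap
  linarith [min_le_right (⌈a * t⌉ / a : ℝ) ⌈t⌉, Int.ceil_lt_add_one t]

theorem ceilGap_add_intCast (ha : a ≠ 0) {n m : ℤ} (hnm : a * n = m) :
    ceilGap a (t + n) = ceilGap a t := by
  have h₁ : (⌈a * (t + n)⌉ : ℝ) / a = ⌈a * t⌉ / a + n := by
    rw [mul_add, hnm, Int.ceil_add_intCast, Int.cast_add, add_div, ← hnm,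
      mul_div_cancel_left₀ _ ha]
  have h₂ : (⌈t + n⌉ : ℝ) = ⌈t⌉ + n := by rw [Int.ceil_add_intCast, Int.cast_add]
  rw [ceilGap, ceilGap, h₁, h₂, min_add_add_right]
  ring

theorem min_sq_ceil_eq (ha : 0 < a) (ht : 0 ≤ t) :
    min ((⌈a * t⌉ : ℝ) ^ 2 / a ^ 2) ((⌈t⌉ : ℝ) ^ 2) = (t + ceilGap a t) ^ 2 := by
  have h₁ : 0 ≤ (⌈a * t⌉ : ℝ) / a := div_nonneg (by positivity) ha.le
  rw [← div_pow, min_sq_of_nonneg_s6 h₁ (by positivity), ceilGap, add_sub_cancel]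

theorem normalizedDeviation_eq (ha : 0 < a) {k : ℝ} (hk : 0 < k) :
    (min (π ^ 2 * (⌈a * k / (a + 1)⌉ : ℝ) ^ 2 / a ^ 2) (π ^ 2 * (⌈k / (a + 1)⌉ : ℝ) ^ 2)
        - π ^ 2 * k ^ 2 / (a + 1) ^ 2) / k
      = 2 * π ^ 2 / (a + 1) * ceilGap a (k / (a + 1))
        + π ^ 2 * ceilGap a (k / (a + 1)) ^ 2 / k := by
  rw [mul_div_assoc, mul_div_assoc, ← mul_min_of_nonneg _ _ (sq_nonneg π),
    min_sq_ceil_eq ha (by positivity)]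
  field_simp
  ring

theorem abs_normalizedDeviation_sub_le (ha : 0 < a) {k : ℝ} (hk : 0 < k) :
    |(min (π ^ 2 * (⌈a * k / (a + 1)⌉ : ℝ) ^ 2 / a ^ 2) (π ^ 2 * (⌈k / (a + 1)⌉ : ℝ) ^ 2)
        - π ^ 2 * k ^ 2 / (a + 1) ^ 2) / k - 2 * π ^ 2 / (a + 1) * ceilGap a (k / (a + 1))|
      ≤ π ^ 2 / k := by
  have hg₀ := ceilGap_nonneg (t := k / (a + 1)) ha
  have hg₁ : ceilGap a (k / (a + 1)) ^ 2 ≤ 1 := by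
    nlinarith [ceilGap_lt_one (a := a) (t := k / (a + 1))]
  rw [normalizedDeviation_eq ha hk, add_sub_cancel_left, abs_of_nonneg (by positivity)]
  gcongr
  nlinarith

end ceilGap

theorem periodic_ceilGap_rat {q : ℚ} (hq : 0 < q) (b : ℝ) :
    Function.Periodic (fun n : ℕ => ceilGap q ((n + b) / (q + 1))) (q.num.toNat + q.den) := by
  intro n
  have hnum : ((q.num.toNat : ℕ) : ℝ) = q.num := by
    exact_mod_cast Int.toNat_of_nonneg (Rat.num_pos.2 hq).le
  have hden : (q : ℝ) * (q.den : ℤ) = q.num := by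
    exact_mod_cast Rat.mul_den_eq_num q
  have hshift : ((↑(n + (q.num.toNat + q.den)) : ℝ) + b) / (q + 1)
      = (n + b) / (q + 1) + (q.den : ℤ) := by
    push_cast at hden ⊢
    rw [hnum, ← hden]
    field_simp
    ring
  simp only [hshift, ceilGap_add_intCast (by positivity) hden]

/-- Rational case of Theorem 6.6: the set of cluster points of `(c_a(k))_{k≥2}`
is finite. -/
theorem stmt6 (a : ℝ) (ha : 0 < a) (hrat : ∃ q : ℚ, a = (q : ℝ))
    (N c : ℤ → ℝ)
    (hN : ∀ k : ℤ, N k = min (π ^ 2 * ((⌈a * (k : ℝ) / (a + 1)⌉ : ℝ)) ^ 2 / a ^ 2)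
        (π ^ 2 * ((⌈(k : ℝ) / (a + 1)⌉ : ℝ)) ^ 2))
    (hc : ∀ k : ℤ, c k = (N k - π ^ 2 * (k : ℝ) ^ 2 / (a + 1) ^ 2) / (k : ℝ)) :
    {x : ℝ | MapClusterPt x atTop (fun n : ℕ => c ((n : ℤ) + 2))}.Finite := by
  obtain ⟨q, rfl⟩ := hrat
  have hq : 0 < q := by exact_mod_cast ha
  set mainTerm : ℕ → ℝ := fun n => 2 * π ^ 2 / (q + 1) * ceilGap q ((n + 2) / (q + 1))
  have hperiodic : Function.Periodic mainTerm (q.num.toNat + q.den) := fun n => by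
    simp only [mainTerm, periodic_ceilGap_rat hq 2 n]
  have hdist : ∀ n : ℕ, dist (c ((n : ℤ) + 2)) (mainTerm n) ≤ π ^ 2 / ((n : ℝ) + 2) := fun n => by
    have hk : (0 : ℝ) < (n : ℝ) + 2 := by positivity
    simpa [Real.dist_eq, hc, hN, mainTerm] using abs_normalizedDeviation_sub_le ha hk
  refine finite_setOf_mapClusterPt_of_tendsto_dist
    (hperiodic.finite_range_nat (by positivity)) ?_
  refine squeeze_zero (fun _ => dist_nonneg) hdist ?_
  simpa using (tendsto_add_atTop_iff_nat 2).2 (tendsto_const_div_atTop_nhds_zero_nat (π ^ 2))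
end

section
/- Let a > 0 be a rational real number, and for an integer k ≥ 4 set N_a(k−2) := min( π²·⌈a·(k−2)/(a+1)⌉²/a² , π²·⌈(k−2)/(a+1)⌉² ) and ĉ_a(k) := (N_a(k−2) − π²·k²/(a+1)²)/k. Then the set of cluster points of the sequence (ĉ_a(k))_{k≥4} is finite. -/
open Real Filter Topology Function

/-!
Write `a = p/d`, so that `a/(a+1) = p/(p+d)` and `1/(a+1) = d/(p+d)`. Both ceilings in `N_a(k-2)`
have the form `⌈θ(k-2)/(a+1)⌉/θ = k/(a+1) + δ_θ(k)` with a bounded offset `δ_θ`, and expanding the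
squares gives `ĉ_a(k) = π² min_θ (2δ_θ(k)/(a+1) + δ_θ(k)²/k)`. Hence `ĉ_a(k)` is asymptotic to the
profile `π² min_θ 2δ_θ(k)/(a+1)`, which for rational `a` is periodic in `k` with period `p+d`
(shifting `k` by `p+d` shifts both ceiling arguments by integers). A sequence asymptotic to one with
finitely many values has finitely many cluster points.
-/

theorem MapClusterPt.of_tendsto_sub {α G : Type*} [TopologicalSpace G] [AddGroup G]
    [IsTopologicalAddGroup G] {F : Filter α} {u v : α → G} {x : G}
    (hx : MapClusterPt x F u) (h : Tendsto (u - v) F (𝓝 0)) : MapClusterPt x F v := by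
  have hpair : MapClusterPt (x, 0) F fun n => (u n, (u - v) n) := by
    rw [((𝓝 x).basis_sets.prod_nhds (𝓝 (0 : G)).basis_sets).mapClusterPt_iff_frequently]
    rintro ⟨s, t⟩ ⟨hs, ht⟩
    exact (mapClusterPt_iff_frequently.mp hx s hs).and_eventually (h ht)
  simpa [comp_def] using hpair.continuousAt_comp (f := fun p : G × G => -p.2 + p.1) (by fun_prop)

theorem finite_setOf_mapClusterPt_of_tendsto_sub {α G : Type*} [TopologicalSpace G] [AddGroup G]
    [IsTopologicalAddGroup G] [T1Space G] {F : Filter α} {u v : α → G}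
    (hv : (Set.range v).Finite) (h : Tendsto (u - v) F (𝓝 0)) :
    {x | MapClusterPt x F u}.Finite :=
  hv.subset fun _ hx => hv.isClosed.mem_of_mapClusterPt (hx.of_tendsto_sub h)
    (Eventually.of_forall fun n => ⟨n, rfl⟩)

theorem Function.Periodic.finite_range_nat_s8 {α : Type*} {f : ℕ → α} {M : ℕ} (hf : Periodic f M)
    (hM : 0 < M) : (Set.range f).Finite :=
  ((Set.finite_Iio M).image f).subset <| by
    rintro _ ⟨n, rfl⟩
    exact ⟨n % M, Nat.mod_lt n hM, hf.map_mod_nat n⟩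

theorem Rat.exists_nat_div_add_one_eq_intCast {q : ℚ} (hq : 0 ≤ q) :
    ∃ M : ℕ, 0 < M ∧ ∃ z : ℤ, (M : ℝ) / (q + 1) = z := by
  refine ⟨q.num.toNat + q.den, by positivity, q.den, ?_⟩
  have hden : (q.den : ℝ) ≠ 0 := by positivity
  have hnum : ((q.num.toNat : ℕ) : ℝ) = q.num := by
    exact_mod_cast Int.toNat_of_nonneg (Rat.num_nonneg.mpr hq)
  have hpos : (q.num : ℝ) + q.den ≠ 0 := by positivity
  rw [Rat.cast_def]
  push_cast [hnum]
  field_simp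

/-- `⌈θ (x - 2) / (a + 1)⌉ / θ = x / (a + 1) + ceilOffset a θ x`; the two terms of `N_a(k - 2)` are
`π² (k / (a + 1) + ceilOffset a θ k)²` for `θ = a` and `θ = 1`. -/
noncomputable def ceilOffset (a θ x : ℝ) : ℝ := ⌈θ * (x - 2) / (a + 1)⌉ / θ - x / (a + 1)

theorem periodic_ceilOffset {a θ T : ℝ} (hθ : θ ≠ 0) (z : ℤ) (hz : θ * T / (a + 1) = z) :
    Periodic (ceilOffset a θ) T := fun x => by
  have hshift : θ * (x + T - 2) / (a + 1) = θ * (x - 2) / (a + 1) + z := by rw [← hz]; ring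
  rw [ceilOffset, ceilOffset, hshift, Int.ceil_add_intCast, Int.cast_add, ← hz]
  field_simp
  ring

theorem min_sq_sub_sq_div (A s c₁ c₂ k : ℝ) (hs : s ≠ 0) (hk : 0 < k) :
    (min (A * (k / s + c₁) ^ 2) (A * (k / s + c₂) ^ 2) - A * k ^ 2 / s ^ 2) / k =
      min (2 * A * c₁ / s + A * c₁ ^ 2 / k) (2 * A * c₂ / s + A * c₂ ^ 2 / k) := by
  rw [← min_sub_sub_right, ← min_div_div_right hk.le]
  congr 1 <;> field_simp <;> ring

noncomputable def weylDeviation (a k : ℝ) : ℝ :=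
  (min (π ^ 2 * (⌈a * (k - 2) / (a + 1)⌉ : ℝ) ^ 2 / a ^ 2) (π ^ 2 * (⌈(k - 2) / (a + 1)⌉ : ℝ) ^ 2) -
    π ^ 2 * k ^ 2 / (a + 1) ^ 2) / k

noncomputable def weylDeviationProfile (a k : ℝ) : ℝ :=
  min (2 * π ^ 2 * ceilOffset a a k / (a + 1)) (2 * π ^ 2 * ceilOffset a 1 k / (a + 1))

theorem abs_ceilOffset_le {a θ : ℝ} (hθ : 0 < θ) (ha : 0 < a + 1) (x : ℝ) :
    |ceilOffset a θ x| ≤ θ⁻¹ + 2 / (a + 1) := by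
  set y := θ * (x - 2) / (a + 1)
  have hoffset : ceilOffset a θ x = (⌈y⌉ - y) / θ - 2 / (a + 1) := by
    have hy : y / θ = x / (a + 1) - 2 / (a + 1) := by simp only [y]; field_simp
    rw [ceilOffset, sub_div _ y, hy]; ring
  have hgap₀ : 0 ≤ (⌈y⌉ - y) / θ := div_nonneg (sub_nonneg.mpr (Int.le_ceil y)) hθ.le
  have hgap₁ : (⌈y⌉ - y) / θ ≤ θ⁻¹ := by
    rw [div_le_iff₀ hθ, inv_mul_cancel₀ hθ.ne']
    linarith [Int.ceil_lt_add_one y]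
  have h2 : 0 < 2 / (a + 1) := by positivity
  rw [hoffset, abs_le]
  constructor <;> linarith

theorem weylDeviation_eq {a k : ℝ} (ha : a ≠ 0) (ha1 : a + 1 ≠ 0) (hk : 0 < k) :
    weylDeviation a k =
      min (2 * π ^ 2 * ceilOffset a a k / (a + 1) + π ^ 2 * ceilOffset a a k ^ 2 / k)
        (2 * π ^ 2 * ceilOffset a 1 k / (a + 1) + π ^ 2 * ceilOffset a 1 k ^ 2 / k) := by
  have h₁ : π ^ 2 * (⌈a * (k - 2) / (a + 1)⌉ : ℝ) ^ 2 / a ^ 2 =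
      π ^ 2 * (k / (a + 1) + ceilOffset a a k) ^ 2 := by
    rw [ceilOffset]; field_simp; ring
  have h₂ : π ^ 2 * (⌈(k - 2) / (a + 1)⌉ : ℝ) ^ 2 = π ^ 2 * (k / (a + 1) + ceilOffset a 1 k) ^ 2 := by
    rw [ceilOffset]; simp
  rw [weylDeviation, h₁, h₂, min_sq_sub_sq_div _ _ _ _ _ ha1 hk]

theorem tendsto_weylDeviation_sub_profile {a : ℝ} (ha : 0 < a) :
    Tendsto (fun k => weylDeviation a k - weylDeviationProfile a k) atTop (𝓝 0) := by
  set C := π ^ 2 * ((a⁻¹ + 2 / (a + 1)) ^ 2 + (1⁻¹ + 2 / (a + 1)) ^ 2)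
  refine squeeze_zero_norm' ?_ (tendsto_const_nhds (x := C).div_atTop tendsto_id)
  filter_upwards [eventually_gt_atTop 0] with k hk
  have hsq : ∀ θ, 0 < θ → ceilOffset a θ k ^ 2 ≤ (θ⁻¹ + 2 / (a + 1)) ^ 2 := fun θ hθ =>
    sq_le_sq' (neg_le_of_abs_le (abs_ceilOffset_le hθ (by linarith) k))
      (le_of_abs_le (abs_ceilOffset_le hθ (by linarith) k))
  have h₁ := hsq a ha
  have h₂ := hsq 1 one_pos
  rw [Real.norm_eq_abs, weylDeviation_eq ha.ne' (by positivity) hk, weylDeviationProfile]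
  refine (abs_min_sub_min_le_max _ _ _ _).trans (max_le ?_ ?_) <;>
  · rw [add_sub_cancel_left, abs_of_nonneg (by positivity), id]
    simp only [C]
    gcongr
    linarith [sq_nonneg (ceilOffset a a k), sq_nonneg (ceilOffset a 1 k)]

theorem periodic_weylDeviationProfile {a : ℝ} (ha : a ≠ 0) (ha1 : a + 1 ≠ 0) {M : ℕ} (z : ℤ)
    (hz : M / (a + 1) = z) : Periodic (weylDeviationProfile a) M := by
  have hper₁ : Periodic (ceilOffset a a) M := by
    refine periodic_ceilOffset ha (M - z) ?_
    push_cast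
    rw [← hz]
    field_simp
    ring
  have hper₂ : Periodic (ceilOffset a 1) M := periodic_ceilOffset one_ne_zero z (by rwa [one_mul])
  intro k
  rw [weylDeviationProfile, weylDeviationProfile, hper₁, hper₂]

/-- Rational case of the last theorem of Section 6.2 (Dirichlet version):
the set of cluster points of `(ĉ_a(k))_{k≥4}` is finite. -/
theorem stmt8 (a : ℝ) (ha : 0 < a) (hrat : ∃ q : ℚ, a = (q : ℝ))
    (N chat : ℤ → ℝ)
    (hN : ∀ k : ℤ, N k = min (π ^ 2 * ((⌈a * (k : ℝ) / (a + 1)⌉ : ℝ)) ^ 2 / a ^ 2)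
        (π ^ 2 * ((⌈(k : ℝ) / (a + 1)⌉ : ℝ)) ^ 2))
    (hchat : ∀ k : ℤ, chat k = (N (k - 2) - π ^ 2 * (k : ℝ) ^ 2 / (a + 1) ^ 2) / (k : ℝ)) :
    {x : ℝ | MapClusterPt x atTop (fun n : ℕ => chat ((n : ℤ) + 4))}.Finite := by
  obtain ⟨q, rfl⟩ := hrat
  obtain ⟨M, hM, z, hz⟩ := Rat.exists_nat_div_add_one_eq_intCast (by exact_mod_cast ha.le)
  have hchat_eq : ∀ n : ℕ, chat ((n : ℤ) + 4) = weylDeviation q ((n : ℝ) + 4) := fun n => by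
    rw [hchat, hN, weylDeviation]; push_cast; ring_nf
  have hper := periodic_weylDeviationProfile ha.ne' (by positivity) z hz
  refine finite_setOf_mapClusterPt_of_tendsto_sub
    (v := fun n : ℕ => weylDeviationProfile q ((n : ℝ) + 4)) ?_ ?_
  · refine Periodic.finite_range_nat_s8 (fun n => ?_) hM
    simp only [Nat.cast_add, add_right_comm _ (M : ℝ), hper _]
  · simp_rw [Pi.sub_def, hchat_eq]
    exact (tendsto_weylDeviation_sub_profile ha).comp
      (tendsto_atTop_add_const_right _ 4 tendsto_natCast_atTop_atTop)
end

section
/- Fix an integer m ≥ 3 and a real number L > 0. For each integer k ≥ 1 write k = j·m + r with integers j ≥ 0 and 1 ≤ r ≤ m, and define d(k) := π²·m²·j²/L² if r = 1, and d(k) := π²·m²·(j + 1/2)²/L² if 2 ≤ r ≤ m; set c(k) := (d(k) − π²·k²/L²)/k. Then the set of cluster points of the sequence (c(k))_{k≥1} is exactly {−2π²/L²} ∪ { 2π²·(s − 1 − m/2)/L² : s an integer with 1 ≤ s ≤ m − 1 }. -/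
open Real Filter Topology

/-- The limit of the subsequence of residue class `r`. -/
noncomputable def ellAux (m : ℕ) (L : ℝ) (r : ℕ) : ℝ :=
  if r = 1 then -(2 * π ^ 2 / L ^ 2)
  else 2 * π ^ 2 * ((m : ℝ) / 2 - (r : ℝ)) / L ^ 2

/-- Proposition 6.2: the cluster points of the normalised deviation of the
optimal Dirichlet partition energies of the equilateral `m`-star from the Weyl
term form exactly `{−2π²/L²} ∪ {2π²(s−1−m/2)/L² : 1 ≤ s ≤ m−1}`. -/
theorem stmt9 (m : ℕ) (hm : 3 ≤ m) (L : ℝ) (hL : 0 < L)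
    (d c : ℕ → ℝ)
    (hd : ∀ j r : ℕ, 1 ≤ r → r ≤ m →
      d (j * m + r) = if r = 1 then π ^ 2 * (m : ℝ) ^ 2 * (j : ℝ) ^ 2 / L ^ 2
        else π ^ 2 * (m : ℝ) ^ 2 * ((j : ℝ) + 1 / 2) ^ 2 / L ^ 2)
    (hc : ∀ k : ℕ, c k = (d k - π ^ 2 * (k : ℝ) ^ 2 / L ^ 2) / (k : ℝ)) :
    {x : ℝ | MapClusterPt x atTop (fun n : ℕ => c (n + 1))}
      = {-(2 * π ^ 2 / L ^ 2)} ∪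
        {y : ℝ | ∃ s : ℕ, 1 ≤ s ∧ s ≤ m - 1 ∧
          y = 2 * π ^ 2 * ((s : ℝ) - 1 - (m : ℝ) / 2) / L ^ 2} := by
  have hm0 : 0 < m := by omega
  have hπ : (0 : ℝ) < π := pi_pos
  have hm1 : (1 : ℝ) ≤ (m : ℝ) := by exact_mod_cast Nat.one_le_iff_ne_zero.2 (by omega)
  have hm2 : (1 : ℝ) ≤ (m : ℝ) ^ 2 := by nlinarith
  set S : Set ℝ := {-(2 * π ^ 2 / L ^ 2)} ∪
      {y : ℝ | ∃ s : ℕ, 1 ≤ s ∧ s ≤ m - 1 ∧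
        y = 2 * π ^ 2 * ((s : ℝ) - 1 - (m : ℝ) / 2) / L ^ 2} with hS
  set C : ℝ := π ^ 2 * (m : ℝ) ^ 2 / L ^ 2 with hCdef
  -- key estimate
  have key : ∀ k : ℕ, 1 ≤ k →
      |c k - ellAux m L ((k - 1) % m + 1)| ≤ C / k := by
    intro k hk
    obtain ⟨j, r, hjr, hr1, hrm, hrdef⟩ :
        ∃ j r : ℕ, j * m + r = k ∧ 1 ≤ r ∧ r ≤ m ∧ (k - 1) % m + 1 = r := by
      refine ⟨(k - 1) / m, (k - 1) % m + 1, ?_, by omega, ?_, rfl⟩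
      · have h := Nat.div_add_mod (k - 1) m
        rw [Nat.mul_comm] at h
        omega
      · have := Nat.mod_lt (k - 1) hm0
        omega
    rw [hrdef]
    subst hjr
    have hdk := hd j r hr1 hrm
    have hkR : ((j * m + r : ℕ) : ℝ) = (j : ℝ) * m + r := by push_cast; ring
    have hk0 : (0 : ℝ) < ((j * m + r : ℕ) : ℝ) := by exact_mod_cast hk
    have hck := hc (j * m + r)
    by_cases h1 : r = 1
    · subst h1
      have hval : c (j * m + 1) - ellAux m L 1 = π ^ 2 / (L ^ 2 * (j * m + 1 : ℕ)) := by
        rw [hck, hdk, if_pos rfl, ellAux, if_pos rfl]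
        have hjm : ((j : ℝ) * m + 1) ≠ 0 := by positivity
        push_cast
        field_simp
        ring
      rw [hval, abs_of_nonneg (by positivity), hCdef, div_div]
      gcongr
      exact le_mul_of_one_le_right (by positivity) hm2
    · have hval : c (j * m + r) - ellAux m L r
          = π ^ 2 * ((m : ℝ) / 2 - (r : ℝ)) ^ 2 / (L ^ 2 * (j * m + r : ℕ)) := by
        rw [hck, hdk, if_neg h1, ellAux, if_neg h1]
        have hrpos : (0 : ℝ) < (r : ℝ) := by exact_mod_cast hr1
        have hkne : ((j : ℝ) * m + r) ≠ 0 := by positivity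
        push_cast
        field_simp
        ring
      rw [hval, abs_of_nonneg (by positivity), hCdef, div_div]
      gcongr π ^ 2 * ?_ / (L ^ 2 * ((j * m + r : ℕ) : ℝ))
      have hrR : (r : ℝ) ≤ m := by exact_mod_cast hrm
      have hr0 : (1 : ℝ) ≤ (r : ℝ) := by exact_mod_cast hr1
      nlinarith [mul_nonneg (sub_nonneg.2 hrR) (by linarith : (0 : ℝ) ≤ (r : ℝ))]
  -- error term tends to zero
  have he : Tendsto (fun n : ℕ => c (n + 1) - ellAux m L (n % m + 1)) atTop (𝓝 0) := by
    refine squeeze_zero_norm (a := fun n : ℕ => C / ((n + 1 : ℕ) : ℝ)) (fun n => ?_) ?_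
    · have := key (n + 1) (by omega)
      simpa using this
    · have h1 := (tendsto_const_div_atTop_nhds_zero_nat C).comp (tendsto_add_atTop_nat 1)
      simpa [Function.comp_def] using h1
  -- every value of ellAux is in S
  have hmemS : ∀ r : ℕ, 1 ≤ r → r ≤ m → ellAux m L r ∈ S := by
    intro r hr1 hrm
    by_cases h1 : r = 1
    · left
      simp [ellAux, h1]
    · right
      refine ⟨m + 1 - r, by omega, by omega, ?_⟩
      have hcast : ((m + 1 - r : ℕ) : ℝ) = (m : ℝ) + 1 - r := by
        have h : r ≤ m + 1 := by omega
        push_cast [Nat.cast_sub h]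
        ring
      rw [ellAux, if_neg h1, hcast]
      ring
  -- each ellAux value is a cluster point
  have hclu : ∀ r : ℕ, 1 ≤ r → r ≤ m →
      MapClusterPt (ellAux m L r) atTop (fun n : ℕ => c (n + 1)) := by
    intro r hr1 hrm
    have hφ : Tendsto (fun j : ℕ => (r - 1) + j * m) atTop atTop := by
      refine tendsto_atTop_mono (fun j => ?_) tendsto_id
      show j ≤ (r - 1) + j * m
      have := Nat.le_mul_of_pos_right j hm0
      omega
    apply MapClusterPt.of_comp hφ
    have hg : ∀ j : ℕ, ((r - 1) + j * m) % m + 1 = r := by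
      intro j
      rw [Nat.add_mul_mod_self_right, Nat.mod_eq_of_lt (by omega)]
      omega
    have h0 := he.comp hφ
    simp only [Function.comp_def] at h0 ⊢
    simp only [hg] at h0
    have h2 := h0.add (tendsto_const_nhds (x := ellAux m L r) (f := atTop))
    simp only [zero_add, sub_add_cancel] at h2
    exact h2.mapClusterPt
  -- the set S is closed
  have hSfin : S.Finite := by
    rw [hS]
    apply (Set.finite_singleton _).union
    have himg : {y : ℝ | ∃ s : ℕ, 1 ≤ s ∧ s ≤ m - 1 ∧
        y = 2 * π ^ 2 * ((s : ℝ) - 1 - (m : ℝ) / 2) / L ^ 2}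
        = (fun s : ℕ => 2 * π ^ 2 * ((s : ℝ) - 1 - (m : ℝ) / 2) / L ^ 2) ''
          (Set.Icc 1 (m - 1)) := by
      ext y
      simp only [Set.mem_setOf_eq, Set.mem_image, Set.mem_Icc]
      constructor
      · rintro ⟨s, h1, h2, h3⟩; exact ⟨s, ⟨h1, h2⟩, h3.symm⟩
      · rintro ⟨s, ⟨h1, h2⟩, h3⟩; exact ⟨s, h1, h2, h3.symm⟩
    rw [himg]
    exact (Set.finite_Icc _ _).image _
  have hSclosed : IsClosed S := hSfin.isClosed
  apply Set.Subset.antisymm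
  · -- cluster points are in S
    intro x hx
    simp only [Set.mem_setOf_eq] at hx
    have hxcl : x ∈ closure S := by
      rw [Metric.mem_closure_iff]
      intro ε hε
      have hev : ∀ᶠ n in atTop,
          ‖c (n + 1) - ellAux m L (n % m + 1)‖ < ε / 2 :=
        (NormedAddCommGroup.tendsto_nhds_zero.mp he) (ε / 2) (by linarith)
      have hfreq := (mapClusterPt_iff_frequently.1 hx) (Metric.ball x (ε / 2))
        (Metric.ball_mem_nhds x (by linarith))
      obtain ⟨n, hn1, hn2⟩ := (hfreq.and_eventually hev).exists
      refine ⟨ellAux m L (n % m + 1),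
        hmemS _ (by omega) (by have := Nat.mod_lt n hm0; omega), ?_⟩
      have h4 : dist (c (n + 1)) (ellAux m L (n % m + 1)) < ε / 2 := by
        rw [Real.dist_eq]
        simpa using hn2
      have h5 : dist x (c (n + 1)) < ε / 2 := by
        rw [dist_comm]
        exact Metric.mem_ball.mp hn1
      have h6 := dist_triangle x (c (n + 1)) (ellAux m L (n % m + 1))
      linarith
    rwa [hSclosed.closure_eq] at hxcl
  · -- every point of S is a cluster point
    intro x hx
    simp only [Set.mem_setOf_eq]
    rcases hx with hx | ⟨s, hs1, hs2, hxe⟩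
    · have hx1 : x = ellAux m L 1 := by
        simp only [Set.mem_singleton_iff] at hx
        simp [ellAux, hx]
      rw [hx1]
      exact hclu 1 le_rfl (by omega)
    · have hr1 : 1 ≤ m + 1 - s := by omega
      have hrm : m + 1 - s ≤ m := by omega
      have hx2 : x = ellAux m L (m + 1 - s) := by
        rw [ellAux, if_neg (by omega)]
        have hcast : ((m + 1 - s : ℕ) : ℝ) = (m : ℝ) + 1 - s := by
          have h : s ≤ m + 1 := by omega
          push_cast [Nat.cast_sub h]
          ring
        rw [hcast, hxe]
        ring
      rw [hx2]
      exact hclu _ hr1 hrm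
end

section
/- Fix an odd integer m ≥ 3 and a real number L > 0. For each integer k ≥ 1 write k = j·m + r with integers j ≥ 0 and 1 ≤ r ≤ m, and define n(k) := π²·m²·(j + 1/2)²/L² if 1 ≤ r ≤ (m−1)/2, and n(k) := π²·m²·(j + 1)²/L² if (m−1)/2 < r ≤ m; set c(k) := (n(k) − π²·k²/L²)/k. Then the set of cluster points of the sequence (c(k))_{k≥1} is exactly {0} ∪ { 2π²·s/L² : s an integer with 1 ≤ s ≤ (m−1)/2 } ∪ { π²·(2t − 1)/L² : t an integer with 1 ≤ t ≤ (m−1)/2 }; in particular it has exactly m elements. -/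
/-!
Writing `k = j m + r` with `1 ≤ r ≤ m`, the energy is `n(k) = π² (k + e_r / 2)² / L²` for an
integer defect `e_r` (`e_r = m - 2r` if `r ≤ (m-1)/2` and `e_r = 2(m - r)` otherwise), so
`c(k) = π² (e_r + e_r² / (4k)) / L²`. Along each residue class `c` therefore converges to
`π² e_r / L²`, and these `m` limits are all the cluster points. For odd `m` the defects
`e_1, …, e_m` run exactly once through `0, 1, …, m - 1`: the odd values for small `r`, the even
ones for large `r`.
-/

open Real Filter Topology

theorem Nat.tendsto_mul_add_atTop {m : ℕ} (hm : m ≠ 0) (r : ℕ) :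
    Tendsto (fun j => m * j + r) atTop atTop :=
  tendsto_atTop_mono (fun j => (Nat.le_mul_of_pos_left j (Nat.pos_of_ne_zero hm)).trans
    (Nat.le_add_right _ r)) tendsto_id

theorem mapClusterPt_atTop_iff_of_tendsto_arithmetic {X : Type*} [TopologicalSpace X]
    [T2Space X] {m : ℕ} (hm : m ≠ 0) {u ℓ : ℕ → X}
    (h : ∀ r < m, Tendsto (fun j => u (m * j + r)) atTop (𝓝 (ℓ r))) {x : X} :
    MapClusterPt x atTop u ↔ ∃ r < m, ℓ r = x := by
  constructor
  · intro hx
    have hle : map u atTop ≤ (Finset.range m).sup fun r => 𝓝 (ℓ r) := fun s hs =>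
      Eventually.atTop_of_arithmetic hm fun r hr =>
        h r hr (Finset.le_sup (f := fun r => 𝓝 (ℓ r)) (Finset.mem_range.2 hr) hs)
    obtain ⟨r, hr, hxr⟩ : ∃ r ∈ Finset.range m, ¬Disjoint (𝓝 x) (𝓝 (ℓ r)) := by
      by_contra! hall
      exact clusterPt_iff_not_disjoint.mp (hx.clusterPt.mono hle)
        (Finset.disjoint_sup_right.2 hall)
    rw [disjoint_nhds_nhds, not_ne_iff, eq_comm] at hxr
    exact ⟨r, Finset.mem_range.1 hr, hxr⟩
  · rintro ⟨r, hr, rfl⟩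
    exact MapClusterPt.of_comp (Nat.tendsto_mul_add_atTop hm r) (h r hr).mapClusterPt

theorem tendsto_mul_add_sq_sub_mul_sq_div (a d : ℝ) :
    Tendsto (fun x : ℝ => (a * (x + d) ^ 2 - a * x ^ 2) / x) atTop (𝓝 (2 * a * d)) := by
  have hlim : Tendsto (fun x : ℝ => a * (2 * d + d ^ 2 * x⁻¹)) atTop
      (𝓝 (a * (2 * d + d ^ 2 * 0))) :=
    (tendsto_inv_atTop_zero.const_mul _ |>.const_add _).const_mul _
  rw [mul_zero, add_zero, ← mul_assoc, mul_comm a 2] at hlim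
  refine hlim.congr' ?_
  filter_upwards [eventually_gt_atTop 0] with x hx
  field_simp
  ring

def starDefect (m r : ℕ) : ℕ := if r ≤ (m - 1) / 2 then m - 2 * r else 2 * (m - r)

theorem starEnergy_eq (m j r : ℕ) (L : ℝ) (hr : r ≤ m) :
    (if r ≤ (m - 1) / 2
      then π ^ 2 * (m : ℝ) ^ 2 * ((j : ℝ) + 1 / 2) ^ 2 / L ^ 2
      else π ^ 2 * (m : ℝ) ^ 2 * ((j : ℝ) + 1) ^ 2 / L ^ 2)
      = π ^ 2 / L ^ 2 * (((j * m + r : ℕ) : ℝ) + starDefect m r / 2) ^ 2 := by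
  unfold starDefect
  split_ifs with h
  · push_cast [Nat.cast_sub (by omega : 2 * r ≤ m)]
    ring
  · push_cast [Nat.cast_sub hr]
    ring

theorem image_starDefect_succ_Iio {m : ℕ} (hm : Odd m) :
    (fun r => starDefect m (r + 1)) '' Set.Iio m = Set.Iio m := by
  obtain ⟨w, rfl⟩ := hm
  ext i
  simp only [Set.mem_image, Set.mem_Iio, starDefect]
  constructor
  · rintro ⟨r, hr, rfl⟩
    split_ifs <;> omega
  · intro hi
    rcases Nat.even_or_odd i with ⟨s, rfl⟩ | ⟨t, rfl⟩
    · exact ⟨2 * w - s, by omega, by rw [if_neg (by omega)]; omega⟩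
    · exact ⟨w - t - 1, by omega, by rw [if_pos (by omega)]; omega⟩

theorem image_Iio_odd_eq_union {m : ℕ} (hm : Odd m) (L : ℝ) :
    (fun i : ℕ => π ^ 2 * (i : ℝ) / L ^ 2) '' Set.Iio m
      = {0} ∪ {y : ℝ | ∃ s : ℕ, 1 ≤ s ∧ s ≤ (m - 1) / 2 ∧ y = 2 * π ^ 2 * (s : ℝ) / L ^ 2}
          ∪ {y : ℝ | ∃ t : ℕ, 1 ≤ t ∧ t ≤ (m - 1) / 2 ∧
              y = π ^ 2 * (2 * (t : ℝ) - 1) / L ^ 2} := by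
  obtain ⟨w, rfl⟩ := hm
  ext y
  simp only [Set.mem_image, Set.mem_Iio, Set.mem_union, Set.mem_singleton_iff,
    Set.mem_ofPred_eq]
  constructor
  · rintro ⟨i, hi, rfl⟩
    rcases Nat.even_or_odd i with ⟨s, rfl⟩ | ⟨t, rfl⟩
    · rcases Nat.eq_zero_or_pos s with rfl | hs
      · simp
      · exact Or.inl (Or.inr ⟨s, hs, by omega, by push_cast; ring⟩)
    · exact Or.inr ⟨t + 1, by omega, by omega, by push_cast; ring⟩
  · rintro ((rfl | ⟨s, hs, hsw, rfl⟩) | ⟨t, ht, htw, rfl⟩)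
    · exact ⟨0, by omega, by simp⟩
    · exact ⟨2 * s, by omega, by push_cast; ring⟩
    · exact ⟨2 * t - 1, by omega, by rw [Nat.cast_sub (by omega)]; push_cast; ring⟩

theorem stmt11_general (m : ℕ) (hodd : Odd m) (L : ℝ) (hL : 0 < L)
    (nn c : ℕ → ℝ)
    (hn : ∀ j r : ℕ, 1 ≤ r → r ≤ m →
      nn (j * m + r) = if r ≤ (m - 1) / 2
        then π ^ 2 * (m : ℝ) ^ 2 * ((j : ℝ) + 1 / 2) ^ 2 / L ^ 2
        else π ^ 2 * (m : ℝ) ^ 2 * ((j : ℝ) + 1) ^ 2 / L ^ 2)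
    (hc : ∀ k : ℕ, c k = (nn k - π ^ 2 * (k : ℝ) ^ 2 / L ^ 2) / (k : ℝ)) :
    {x : ℝ | MapClusterPt x atTop (fun n : ℕ => c (n + 1))}
      = {0} ∪ {y : ℝ | ∃ s : ℕ, 1 ≤ s ∧ s ≤ (m - 1) / 2 ∧ y = 2 * π ^ 2 * (s : ℝ) / L ^ 2}
          ∪ {y : ℝ | ∃ t : ℕ, 1 ≤ t ∧ t ≤ (m - 1) / 2 ∧
              y = π ^ 2 * (2 * (t : ℝ) - 1) / L ^ 2}
    ∧ {x : ℝ | MapClusterPt x atTop (fun n : ℕ => c (n + 1))}.ncard = m := by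
  have hm : m ≠ 0 := hodd.pos.ne'
  have htend : ∀ r < m, Tendsto (fun j => c (m * j + r + 1)) atTop
      (𝓝 (π ^ 2 * (starDefect m (r + 1) : ℝ) / L ^ 2)) := by
    intro r hr
    have hlim := (tendsto_mul_add_sq_sub_mul_sq_div (π ^ 2 / L ^ 2)
      (starDefect m (r + 1) / 2)).comp
        (tendsto_natCast_atTop_atTop.comp (Nat.tendsto_mul_add_atTop hm (r + 1)))
    convert hlim using 2 with j
    · rw [show m * j + r + 1 = j * m + (r + 1) by ring, hc, hn j (r + 1) (by omega) hr,
        starEnergy_eq m j (r + 1) L hr]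
      simp only [Function.comp, mul_comm m j]
      ring
    · ring
  have hset : {x : ℝ | MapClusterPt x atTop (fun n : ℕ => c (n + 1))}
      = (fun i : ℕ => π ^ 2 * (i : ℝ) / L ^ 2) '' Set.Iio m := by
    ext x
    rw [Set.mem_ofPred_eq, mapClusterPt_atTop_iff_of_tendsto_arithmetic hm htend,
      ← image_starDefect_succ_Iio hodd, ← Set.image_comp]
    rfl
  have hinj : Function.Injective fun i : ℕ => π ^ 2 * (i : ℝ) / L ^ 2 := fun i i' h => by
    simpa [hL.ne', Real.pi_ne_zero] using h
  refine ⟨hset.trans (image_Iio_odd_eq_union hodd L), ?_⟩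
  rw [hset, Set.ncard_image_of_injective _ hinj, ← Finset.coe_Iio, Set.ncard_coe_finset,
    Nat.card_Iio]

/-- Odd-`m` case of the final proposition of Section 6.1 (Neumann energies of the
equilateral `m`-star): the cluster point set is
`{0} ∪ {2π²s/L² : 1 ≤ s ≤ (m−1)/2} ∪ {π²(2t−1)/L² : 1 ≤ t ≤ (m−1)/2}`,
which has exactly `m` elements. -/
theorem stmt11 (m : ℕ) (hm : 3 ≤ m) (hodd : Odd m) (L : ℝ) (hL : 0 < L)
    (nn c : ℕ → ℝ)
    (hn : ∀ j r : ℕ, 1 ≤ r → r ≤ m →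
      nn (j * m + r) = if r ≤ (m - 1) / 2
        then π ^ 2 * (m : ℝ) ^ 2 * ((j : ℝ) + 1 / 2) ^ 2 / L ^ 2
        else π ^ 2 * (m : ℝ) ^ 2 * ((j : ℝ) + 1) ^ 2 / L ^ 2)
    (hc : ∀ k : ℕ, c k = (nn k - π ^ 2 * (k : ℝ) ^ 2 / L ^ 2) / (k : ℝ)) :
    {x : ℝ | MapClusterPt x atTop (fun n : ℕ => c (n + 1))}
      = {0} ∪ {y : ℝ | ∃ s : ℕ, 1 ≤ s ∧ s ≤ (m - 1) / 2 ∧ y = 2 * π ^ 2 * (s : ℝ) / L ^ 2}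
          ∪ {y : ℝ | ∃ t : ℕ, 1 ≤ t ∧ t ≤ (m - 1) / 2 ∧
              y = π ^ 2 * (2 * (t : ℝ) - 1) / L ^ 2}
    ∧ {x : ℝ | MapClusterPt x atTop (fun n : ℕ => c (n + 1))}.ncard = m :=
  stmt11_general m hodd L hL nn c hn hc
end

section
/- Let k > j ≥ 0 be integers and L > 0 a real number. Let ℓ_1, …, ℓ_k be positive real numbers with ℓ_1 + ⋯ + ℓ_k ≤ L, and let λ_1, …, λ_k be real numbers such that λ_i ≥ π²/(4ℓ_i²) for all 1 ≤ i ≤ k and, in addition, λ_i ≥ π²/ℓ_i² for all j < i ≤ k. Then (1/k)·(λ_1 + ⋯ + λ_k) ≥ (π²/(4kL²))·( k³ + 3(k−j)³ ). -/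
/-!
Bound each `λ_i` below by `¼·π²/ℓ_i²`, plus a further `¾·π²/ℓ_i²` when `i ≥ j`. Jensen's
inequality for the convex function `x ↦ x⁻²` shows that `m` positive lengths of total at most
`L` satisfy `∑ ℓ_i⁻² ≥ m³/L²`; applied to all `k` indices and to the last `k - j` of them, the
two parts of the lower bound give `¼·π²·k³/L²` and `¾·π²·(k - j)³/L²`.
-/

open Real Finset

theorem card_pow_three_le_sq_sum_mul_sum_inv_sq {ι : Type*} (s : Finset ι) {f : ι → ℝ}
    (hf : ∀ i ∈ s, 0 < f i) :
    (#s : ℝ) ^ 3 ≤ (∑ i ∈ s, f i) ^ 2 * ∑ i ∈ s, (f i ^ 2)⁻¹ := by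
  rcases s.eq_empty_or_nonempty with rfl | hs
  · simp
  have hn : (0 : ℝ) < #s := by exact_mod_cast hs.card_pos
  have hjensen := Real.zpow_arith_mean_le_arith_mean_zpow s (fun _ => (#s : ℝ)⁻¹) f
    (fun _ _ => by positivity) (by simp [hn.ne']) hf (-2)
  simp only [← mul_sum, zpow_neg, zpow_ofNat] at hjensen
  have hsum : 0 < ∑ i ∈ s, f i := sum_pos hf hs
  calc (#s : ℝ) ^ 3 = (∑ i ∈ s, f i) ^ 2 * (#s * (((#s : ℝ)⁻¹ * ∑ i ∈ s, f i) ^ 2)⁻¹) := by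
        field_simp
    _ ≤ (∑ i ∈ s, f i) ^ 2 * (#s * ((#s : ℝ)⁻¹ * ∑ i ∈ s, (f i ^ 2)⁻¹)) := by gcongr
    _ = (∑ i ∈ s, f i) ^ 2 * ∑ i ∈ s, (f i ^ 2)⁻¹ := by field_simp

theorem card_pow_three_div_sq_le_sum_inv_sq {ι : Type*} (s : Finset ι) {f : ι → ℝ} {L : ℝ}
    (hf : ∀ i ∈ s, 0 < f i) (hL : ∑ i ∈ s, f i ≤ L) :
    (#s : ℝ) ^ 3 / L ^ 2 ≤ ∑ i ∈ s, (f i ^ 2)⁻¹ := by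
  rcases s.eq_empty_or_nonempty with rfl | hs
  · simp
  have hsum : 0 < ∑ i ∈ s, f i := sum_pos hf hs
  rw [div_le_iff₀ (by nlinarith)]
  calc (#s : ℝ) ^ 3 ≤ (∑ i ∈ s, f i) ^ 2 * ∑ i ∈ s, (f i ^ 2)⁻¹ :=
        card_pow_three_le_sq_sum_mul_sum_inv_sq s hf
    _ ≤ L ^ 2 * ∑ i ∈ s, (f i ^ 2)⁻¹ := by gcongr
    _ = _ := mul_comm _ _

theorem sum_add_sum_le_sum_of_le {ι : Type*} [Fintype ι] [DecidableEq ι] (S : Finset ι)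
    {a b g : ι → ℝ}
    (ha : ∀ i, a i ≤ g i) (hab : ∀ i ∈ S, a i + b i ≤ g i) :
    ∑ i, a i + ∑ i ∈ S, b i ≤ ∑ i, g i := by
  rw [← univ_inter S, ← sum_ite_mem, ← sum_add_distrib]
  refine sum_le_sum fun i _ => ?_
  split_ifs with hi
  · exact hab i hi
  · simpa using ha i

theorem stmt13_general (k j : ℕ) (hj : j < k) (L : ℝ)
    (ℓ lam : Fin k → ℝ) (hℓ : ∀ i, 0 < ℓ i)
    (hsum : ∑ i, ℓ i ≤ L)
    (h1 : ∀ i, π ^ 2 / (4 * ℓ i ^ 2) ≤ lam i)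
    (h2 : ∀ i : Fin k, j ≤ (i : ℕ) → π ^ 2 / ℓ i ^ 2 ≤ lam i) :
    (π ^ 2 / (4 * (k : ℝ) * L ^ 2)) * ((k : ℝ) ^ 3 + 3 * ((k : ℝ) - (j : ℝ)) ^ 3)
      ≤ (1 / (k : ℝ)) * ∑ i, lam i := by
  set S : Finset (Fin k) := Ici ⟨j, hj⟩
  have hS : (#S : ℝ) = k - j := by simp [S, Nat.cast_sub hj.le]
  have hsumS : ∑ i ∈ S, ℓ i ≤ L :=
    (sum_le_sum_of_subset_of_nonneg (subset_univ S) fun i _ _ => (hℓ i).le).trans hsum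
  have hall := card_pow_three_div_sq_le_sum_inv_sq univ (fun i _ => hℓ i) hsum
  have hstrong := card_pow_three_div_sq_le_sum_inv_sq S (fun i _ => hℓ i) hsumS
  rw [card_univ, Fintype.card_fin] at hall
  rw [hS] at hstrong
  have hsplit : ∑ i, π ^ 2 / 4 * (ℓ i ^ 2)⁻¹ + ∑ i ∈ S, 3 * π ^ 2 / 4 * (ℓ i ^ 2)⁻¹
      ≤ ∑ i, lam i := by
    refine sum_add_sum_le_sum_of_le S (fun i => ?_) (fun i hi => ?_)
    · convert h1 i using 1; ring
    · convert h2 i (by simpa [S, Fin.le_def] using hi) using 1; ring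
  calc (π ^ 2 / (4 * (k : ℝ) * L ^ 2)) * ((k : ℝ) ^ 3 + 3 * ((k : ℝ) - (j : ℝ)) ^ 3)
      = 1 / k * (π ^ 2 / 4 * ((k : ℝ) ^ 3 / L ^ 2)
          + 3 * π ^ 2 / 4 * (((k : ℝ) - j) ^ 3 / L ^ 2)) := by ring
    _ ≤ 1 / k * (π ^ 2 / 4 * ∑ i, (ℓ i ^ 2)⁻¹ + 3 * π ^ 2 / 4 * ∑ i ∈ S, (ℓ i ^ 2)⁻¹) := by
        gcongr
    _ ≤ 1 / k * ∑ i, lam i := by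
        rw [mul_sum, mul_sum]
        gcongr

/-- Analytic core of Theorem 4.2: if `ℓ_1 + ⋯ + ℓ_k ≤ L`, `λ_i ≥ π²/(4ℓ_i²)` for
all `i`, and `λ_i ≥ π²/ℓ_i²` for the last `k−j` indices, then
`(1/k)·∑ λ_i ≥ (π²/(4kL²))(k³ + 3(k−j)³)`. -/
theorem stmt13 (k j : ℕ) (hj : j < k) (L : ℝ) (hL : 0 < L)
    (ℓ lam : Fin k → ℝ) (hℓ : ∀ i, 0 < ℓ i)
    (hsum : ∑ i, ℓ i ≤ L)
    (h1 : ∀ i, π ^ 2 / (4 * ℓ i ^ 2) ≤ lam i)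
    (h2 : ∀ i : Fin k, j ≤ (i : ℕ) → π ^ 2 / ℓ i ^ 2 ≤ lam i) :
    (π ^ 2 / (4 * (k : ℝ) * L ^ 2)) * ((k : ℝ) ^ 3 + 3 * ((k : ℝ) - (j : ℝ)) ^ 3)
      ≤ (1 / (k : ℝ)) * ∑ i, lam i :=
  stmt13_general k j hj L ℓ lam hℓ hsum h1 h2
end

section
/- Let F_1 and F_2 be disjoint finite sets with F := F_1 ∪ F_2 nonempty, let ℓ : F → ℝ be a function with ℓ_e > 0 for all e ∈ F, set L := ∑_{e ∈ F} ℓ_e, and let n ≥ 1 be an integer. Suppose m : F → ℤ satisfies m_e·(L/n) ≤ ℓ_e < (m_e + 1)·(L/n) for every e ∈ F_1, and (2m_e − 1)·L/(2n) ≤ ℓ_e < (2m_e + 1)·L/(2n) for every e ∈ F_2. Set M := ∑_{e ∈ F} m_e. Then M − ⌊|F_2|/2⌋ ≤ n ≤ M + |F| − 1 − ⌊|F_2|/2⌋. -/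
open Finset

/-- Combinatorial core of Theorem 5.1: the counting lemma relating the total
number of clusters `M = ∑ m_e` of the test partition to the parameter `n`. -/
theorem stmt16 {α : Type*} [DecidableEq α] (F1 F2 : Finset α) (hdisj : Disjoint F1 F2)
    (hne : (F1 ∪ F2).Nonempty) (ℓ : α → ℝ) (hℓ : ∀ e ∈ F1 ∪ F2, 0 < ℓ e)
    (L : ℝ) (hL : L = ∑ e ∈ F1 ∪ F2, ℓ e)
    (n : ℤ) (hn : 1 ≤ n)
    (m : α → ℤ)
    (hm1 : ∀ e ∈ F1, (m e : ℝ) * (L / (n : ℝ)) ≤ ℓ e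
      ∧ ℓ e < ((m e : ℝ) + 1) * (L / (n : ℝ)))
    (hm2 : ∀ e ∈ F2, (2 * (m e : ℝ) - 1) * L / (2 * (n : ℝ)) ≤ ℓ e
      ∧ ℓ e < (2 * (m e : ℝ) + 1) * L / (2 * (n : ℝ)))
    (M : ℤ) (hM : M = ∑ e ∈ F1 ∪ F2, m e) :
    M - ((F2.card / 2 : ℕ) : ℤ) ≤ n
    ∧ n ≤ M + ((F1 ∪ F2).card : ℤ) - 1 - ((F2.card / 2 : ℕ) : ℤ) := by
  have hLpos : 0 < L := hL ▸ Finset.sum_pos hℓ hne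
  have hn0 : (0:ℝ) < (n:ℝ) := by
    have : (1:ℝ) ≤ (n:ℝ) := by exact_mod_cast hn
    linarith
  have hnne : (n:ℝ) ≠ 0 := ne_of_gt hn0
  have hh : 0 < L / (n:ℝ) := div_pos hLpos hn0
  have hMsum : (M:ℝ) = ∑ e ∈ F1, (m e:ℝ) + ∑ e ∈ F2, (m e:ℝ) := by
    rw [hM, Finset.sum_union hdisj]; push_cast; ring
  -- lower bound
  have low1 : ∑ e ∈ F1, (m e:ℝ) * (L/(n:ℝ)) ≤ ∑ e ∈ F1, ℓ e :=
    Finset.sum_le_sum fun e he => (hm1 e he).1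
  have low2 : ∑ e ∈ F2, ((m e:ℝ) - 1/2) * (L/(n:ℝ)) ≤ ∑ e ∈ F2, ℓ e := by
    refine Finset.sum_le_sum fun e he => ?_
    have h := (hm2 e he).1
    have heq : ((m e:ℝ) - 1/2) * (L/(n:ℝ)) = (2*(m e:ℝ) - 1)*L/(2*(n:ℝ)) := by
      rw [mul_div_assoc, show (2:ℝ)*(n:ℝ) = (n:ℝ)*2 by ring, ← div_div]; ring
    rw [heq]; exact h
  have hLsum : ∑ e ∈ F1, ℓ e + ∑ e ∈ F2, ℓ e = L := by
    rw [hL, Finset.sum_union hdisj]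
  have lower : ((M:ℝ) - (F2.card:ℝ)/2) * (L/(n:ℝ)) ≤ L := by
    have e1 : ∑ e ∈ F1, (m e:ℝ) * (L/(n:ℝ)) = (∑ e ∈ F1, (m e:ℝ)) * (L/(n:ℝ)) := by
      rw [Finset.sum_mul]
    have e2 : ∑ e ∈ F2, ((m e:ℝ) - 1/2) * (L/(n:ℝ))
        = (∑ e ∈ F2, (m e:ℝ) - (F2.card:ℝ)/2) * (L/(n:ℝ)) := by
      rw [← Finset.sum_mul, Finset.sum_sub_distrib, Finset.sum_const, nsmul_eq_mul]
      ring
    rw [e1] at low1; rw [e2] at low2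
    calc ((M:ℝ) - (F2.card:ℝ)/2) * (L/(n:ℝ))
        = (∑ e ∈ F1, (m e:ℝ)) * (L/(n:ℝ))
          + (∑ e ∈ F2, (m e:ℝ) - (F2.card:ℝ)/2) * (L/(n:ℝ)) := by rw [hMsum]; ring
      _ ≤ ∑ e ∈ F1, ℓ e + ∑ e ∈ F2, ℓ e := add_le_add low1 low2
      _ = L := hLsum
  have lower' : (M:ℝ) - (F2.card:ℝ)/2 ≤ (n:ℝ) := by
    have hnL : (n:ℝ) * (L/(n:ℝ)) = L := by field_simp
    have : ((M:ℝ) - (F2.card:ℝ)/2) * (L/(n:ℝ)) ≤ (n:ℝ) * (L/(n:ℝ)) := by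
      rw [hnL]; exact lower
    exact le_of_mul_le_mul_right this hh
  have hint1 : 2*M - (F2.card:ℤ) ≤ 2*n := by
    have : ((2*M - (F2.card:ℤ) : ℤ) : ℝ) ≤ ((2*n : ℤ) : ℝ) := by push_cast; linarith
    exact_mod_cast this
  -- upper bound
  set g : α → ℝ := fun e => if e ∈ F1 then ((m e:ℝ)+1)*(L/(n:ℝ))
    else ((m e:ℝ)+1/2)*(L/(n:ℝ)) with hgdef
  have hlt : ∀ e ∈ F1 ∪ F2, ℓ e < g e := by
    intro e he
    rcases Finset.mem_union.mp he with h1 | h2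
    · simp only [hgdef, if_pos h1]; exact (hm1 e h1).2
    · have hnot : e ∉ F1 := fun h => Finset.disjoint_left.mp hdisj h h2
      simp only [hgdef, if_neg hnot]
      have h := (hm2 e h2).2
      have heq : ((m e:ℝ)+1/2)*(L/(n:ℝ)) = (2*(m e:ℝ)+1)*L/(2*(n:ℝ)) := by
        rw [mul_div_assoc, show (2:ℝ)*(n:ℝ) = (n:ℝ)*2 by ring, ← div_div]; ring
      rw [heq]; exact h
  have hstrict : L < ∑ e ∈ F1 ∪ F2, g e := hL ▸ Finset.sum_lt_sum_of_nonempty hne hlt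
  have hg : ∑ e ∈ F1 ∪ F2, g e
      = ((M:ℝ) + (F1.card:ℝ) + (F2.card:ℝ)/2) * (L/(n:ℝ)) := by
    rw [Finset.sum_union hdisj]
    have g1 : ∑ e ∈ F1, g e = ∑ e ∈ F1, ((m e:ℝ)+1)*(L/(n:ℝ)) :=
      Finset.sum_congr rfl fun e he => by simp [hgdef, he]
    have g2 : ∑ e ∈ F2, g e = ∑ e ∈ F2, ((m e:ℝ)+1/2)*(L/(n:ℝ)) :=
      Finset.sum_congr rfl fun e he => by
        have : e ∉ F1 := fun h => Finset.disjoint_left.mp hdisj h he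
        simp [hgdef, this]
    rw [g1, g2, ← Finset.sum_mul, ← Finset.sum_mul, Finset.sum_add_distrib,
      Finset.sum_add_distrib, Finset.sum_const, Finset.sum_const, nsmul_eq_mul,
      nsmul_eq_mul, hMsum]
    ring
  have upper' : (n:ℝ) < (M:ℝ) + (F1.card:ℝ) + (F2.card:ℝ)/2 := by
    have hnL : (n:ℝ) * (L/(n:ℝ)) = L := by field_simp
    have : (n:ℝ) * (L/(n:ℝ)) < ((M:ℝ) + (F1.card:ℝ) + (F2.card:ℝ)/2) * (L/(n:ℝ)) := by
      rw [hnL, ← hg]; exact hstrict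
    exact lt_of_mul_lt_mul_right this (le_of_lt hh)
  have hint2 : 2*n < 2*M + 2*(F1.card:ℤ) + (F2.card:ℤ) := by
    have : ((2*n : ℤ) : ℝ) < ((2*M + 2*(F1.card:ℤ) + (F2.card:ℤ) : ℤ) : ℝ) := by
      push_cast; linarith
    exact_mod_cast this
  have hcard : (F1 ∪ F2).card = F1.card + F2.card := Finset.card_union_of_disjoint hdisj
  constructor <;> omega
end
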